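/- For all a, b > 0 and ε > 0, the function β_ε satisfies the bounds (ε²/4)·(√a - √b)² ≤ (ε²/4)·(a - b)²/(a + b) ≤ β_ε(a,b) ≤ (ε²/2)·(√a - √b)². -/

import Mathlib

open Real

/-- The logarithmic mean `Λ(s,t)`. -/
noncomputable def logMean (s t : ℝ) : ℝ :=
  if s = t then s else (s - t) / (Real.log s - Real.log t)

/-- The harmonic-logarithmic mean `Λ_H(s,t) = st/Λ(s,t)`. -/
noncomputable def harmLogMean (s t : ℝ) : ℝ := s * t / logMean s t

/-- `α*_ε(a,b,ξ) = ε ∫₀^ξ sinh(x/ε) Λ_H(a e^{-x/ε}, b e^{x/ε}) dx`. -/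
noncomputable def alphaEps (ε a b ξ : ℝ) : ℝ :=
  ε * ∫ x in (0:ℝ)..ξ,
    Real.sinh (x / ε) * harmLogMean (a * Real.exp (-x / ε)) (b * Real.exp (x / ε))

/-- `β_ε(a,b) = α*_ε(a, b, (ε/2) log(a/b))`. -/
noncomputable def betaEps (ε a b : ℝ) : ℝ :=
  alphaEps ε a b ((ε / 2) * Real.log (a / b))

/-!
Write `a = m e^c`, `b = m e^{-c}` and substitute `u = x / ε`. The arguments of `Λ_H` become
`m e^{±(c - u)}`, whose logarithmic mean is `m sinh v / v` with `v = c - u`, i.e.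
`m * dslope sinh 0 v`; hence `β_ε(a,b) = ε² m ∫₀^c sinh u / (dslope sinh 0 (c - u)) du`.
Since `sinh v / v ≥ 1`, the integral is at most `cosh c - 1`, and `m (cosh c - 1)` is
`(√a - √b)² / 2`. For `0 ≤ v ≤ c`, `2 sinh v cosh (c - v) = sinh (2v - c) - sinh (-c)`,
which the mean value theorem bounds by `2v cosh c`; so the integral is at least
`∫₀^c sinh u cosh u / cosh c = sinh² c / (2 cosh c)`, and `m sinh² c / (2 cosh c)` is
`(a - b)² / (4 (a + b))`. The integral is even in `c`, so it suffices to take `c ≥ 0`.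
-/

namespace Real

lemma dslope_sinh_zero_of_ne {v : ℝ} (hv : v ≠ 0) : dslope sinh 0 v = sinh v / v := by
  simp [dslope_of_ne _ hv, slope_def_field]

lemma dslope_sinh_zero_neg (v : ℝ) : dslope sinh 0 (-v) = dslope sinh 0 v := by
  rcases eq_or_ne v 0 with rfl | hv
  · simp
  · rw [dslope_sinh_zero_of_ne hv, dslope_sinh_zero_of_ne (neg_ne_zero.2 hv), sinh_neg,
      neg_div_neg_eq]

lemma one_le_dslope_sinh_zero (v : ℝ) : 1 ≤ dslope sinh 0 v := by
  rcases lt_trichotomy v 0 with hv | rfl | hv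
  · rw [dslope_sinh_zero_of_ne hv.ne, one_le_div_of_neg hv]
    exact sinh_le_self_iff.2 hv.le
  · simp
  · rw [dslope_sinh_zero_of_ne hv.ne', one_le_div hv]
    exact self_le_sinh_iff.2 hv.le

lemma continuous_dslope_sinh_zero : Continuous (dslope sinh 0) := by
  refine continuous_iff_continuousAt.2 fun v => ?_
  rcases eq_or_ne v 0 with rfl | hv
  · exact continuousAt_dslope_same.2 (differentiable_sinh 0)
  · exact (continuousAt_dslope_of_ne hv).2 continuous_sinh.continuousAt

lemma sinh_sub_sinh_le_of_abs_le {x y r : ℝ} (hxy : x ≤ y) (hx : |x| ≤ r) (hy : |y| ≤ r) :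
    sinh y - sinh x ≤ cosh r * (y - x) := by
  refine (convex_Icc (-r) r).image_sub_le_mul_sub_of_deriv_le continuous_sinh.continuousOn
    differentiable_sinh.differentiableOn (fun z hz => ?_) x (abs_le.1 hx) y (abs_le.1 hy) hxy
  rw [interior_Icc] at hz
  rw [deriv_sinh, cosh_le_cosh]
  exact (abs_lt.2 hz).le.trans (le_abs_self r)

lemma sinh_mul_cosh_sub_le {c v : ℝ} (hv : 0 ≤ v) (hvc : v ≤ c) :
    sinh v * cosh (c - v) ≤ v * cosh c := by
  have hprod : 2 * (sinh v * cosh (c - v)) = sinh (2 * v - c) - sinh (-c) := by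
    have h := sinh_add v (c - v)
    rw [add_sub_cancel] at h
    rw [sinh_neg, show 2 * v - c = v - (c - v) by ring, sinh_sub, h]
    ring
  have hc : 0 ≤ c := hv.trans hvc
  have := sinh_sub_sinh_le_of_abs_le (x := -c) (y := 2 * v - c) (r := c) (by linarith)
    (by rw [abs_neg, abs_of_nonneg hc]) (abs_le.2 ⟨by linarith, by linarith⟩)
  linarith

lemma dslope_sinh_zero_sub_mul_cosh_le {c u : ℝ} (hu : 0 ≤ u) (huc : u ≤ c) :
    dslope sinh 0 (c - u) * cosh u ≤ cosh c := by
  rcases eq_or_lt_of_le huc with rfl | huc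
  · simp
  · have hv : 0 < c - u := sub_pos.2 huc
    have key := sinh_mul_cosh_sub_le hv.le (sub_le_self c hu)
    rw [sub_sub_cancel] at key
    rw [dslope_sinh_zero_of_ne hv.ne', div_mul_eq_mul_div, div_le_iff₀ hv, mul_comm (cosh c)]
    exact key

end Real

lemma logMean_mul_exp {m : ℝ} (hm : 0 < m) (v : ℝ) :
    logMean (m * exp v) (m * exp (-v)) = m * dslope sinh 0 v := by
  rcases eq_or_ne v 0 with rfl | hv
  · simp [logMean]
  · have hne : m * exp v ≠ m * exp (-v) := by
      rw [Ne, mul_right_inj' hm.ne', exp_eq_exp]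
      exact fun h => hv (by linarith)
    rw [logMean, if_neg hne, log_mul hm.ne' (exp_ne_zero _), log_mul hm.ne' (exp_ne_zero _),
      log_exp, log_exp, dslope_sinh_zero_of_ne hv, sinh_eq,
      show log m + v - (log m + -v) = 2 * v by ring]
    field_simp

lemma harmLogMean_mul_exp {m : ℝ} (hm : 0 < m) (v : ℝ) :
    harmLogMean (m * exp v) (m * exp (-v)) = m / dslope sinh 0 v := by
  have hS : dslope sinh 0 v ≠ 0 := (one_pos.trans_le (one_le_dslope_sinh_zero v)).ne'
  rw [harmLogMean, logMean_mul_exp hm, mul_mul_mul_comm, ← exp_add, add_neg_cancel, exp_zero]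
  field_simp

noncomputable def betaProfile (c : ℝ) : ℝ :=
  ∫ u in (0 : ℝ)..c, sinh u / dslope sinh 0 (c - u)

lemma betaEps_mul_exp (ε : ℝ) {m : ℝ} (hm : 0 < m) (c : ℝ) :
    betaEps ε (m * exp c) (m * exp (-c)) = ε ^ 2 * m * betaProfile c := by
  rcases eq_or_ne ε 0 with rfl | hε
  · simp [betaEps, alphaEps]
  have hξ : ε / 2 * log (m * exp c / (m * exp (-c))) = ε * c := by
    rw [mul_div_mul_left _ _ hm.ne', ← exp_sub, log_exp]
    ring
  have hintegrand : ∀ x : ℝ, sinh (x / ε) *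
      harmLogMean (m * exp c * exp (-x / ε)) (m * exp (-c) * exp (x / ε)) =
      m * (sinh (x / ε) / dslope sinh 0 (c - x / ε)) := fun x => by
    rw [mul_assoc, mul_assoc, ← exp_add, ← exp_add, neg_div,
      show c + -(x / ε) = c - x / ε by ring, show -c + x / ε = -(c - x / ε) by ring,
      harmLogMean_mul_exp hm]
    ring
  rw [betaEps, alphaEps, hξ, intervalIntegral.integral_congr fun x _ => hintegrand x,
    intervalIntegral.integral_comp_div (fun u => m * (sinh u / dslope sinh 0 (c - u))) hε,
    zero_div, mul_div_cancel_left₀ c hε, intervalIntegral.integral_const_mul, betaProfile,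
    smul_eq_mul]
  ring

lemma betaProfile_neg (c : ℝ) : betaProfile (-c) = betaProfile c := by
  have hodd : ∀ u : ℝ, sinh u / dslope sinh 0 (-c - u) =
      -((fun w => sinh w / dslope sinh 0 (c - w)) (-u)) := fun u => by
    show _ = -(sinh (-u) / dslope sinh 0 (c - -u))
    rw [sub_neg_eq_add, show -c - u = -(c + u) by ring, dslope_sinh_zero_neg, sinh_neg, neg_div,
      neg_neg]
  rw [betaProfile, intervalIntegral.integral_congr fun u _ => hodd u,
    intervalIntegral.integral_neg,
    intervalIntegral.integral_comp_neg (f := fun w => sinh w / dslope sinh 0 (c - w)),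
    neg_neg, neg_zero, intervalIntegral.integral_symm, neg_neg, betaProfile]

lemma intervalIntegrable_betaProfile_integrand (c a b : ℝ) :
    IntervalIntegrable (fun u => sinh u / dslope sinh 0 (c - u)) MeasureTheory.volume a b :=
  (continuous_sinh.div (continuous_dslope_sinh_zero.comp (continuous_const.sub continuous_id))
    fun _ => (one_pos.trans_le (one_le_dslope_sinh_zero _)).ne').intervalIntegrable a b

lemma betaProfile_le (c : ℝ) : betaProfile c ≤ cosh c - 1 := by
  wlog hc : 0 ≤ c
  · simpa [betaProfile_neg, cosh_neg] using this (-c) (by linarith)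
  calc betaProfile c ≤ ∫ u in (0 : ℝ)..c, sinh u :=
        intervalIntegral.integral_mono_on hc (intervalIntegrable_betaProfile_integrand c 0 c)
          (continuous_sinh.intervalIntegrable 0 c) fun u hu =>
            div_le_self (sinh_nonneg_iff.2 hu.1) (one_le_dslope_sinh_zero _)
    _ = cosh c - 1 := by
      rw [intervalIntegral.integral_eq_sub_of_hasDerivAt (fun x _ => hasDerivAt_cosh x)
        (continuous_sinh.intervalIntegrable 0 c), cosh_zero]

lemma sinh_sq_div_le_betaProfile (c : ℝ) : sinh c ^ 2 / (2 * cosh c) ≤ betaProfile c := by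
  wlog hc : 0 ≤ c
  · simpa [betaProfile_neg, cosh_neg] using this (-c) (by linarith)
  have hcosh := cosh_pos c
  have hprimitive : ∀ x ∈ Set.uIcc 0 c, HasDerivAt (fun w => sinh w ^ 2 / (2 * cosh c))
      (sinh x * cosh x / cosh c) x := fun x _ =>
    (((hasDerivAt_sinh x).fun_pow 2).div_const (2 * cosh c)).congr_deriv (by
      field_simp
      ring)
  have hcont : Continuous fun u => sinh u * cosh u / cosh c :=
    (continuous_sinh.mul continuous_cosh).div_const _
  calc sinh c ^ 2 / (2 * cosh c) = ∫ u in (0 : ℝ)..c, sinh u * cosh u / cosh c := by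
        rw [intervalIntegral.integral_eq_sub_of_hasDerivAt hprimitive
          (hcont.intervalIntegrable 0 c)]
        simp
    _ ≤ betaProfile c := by
      refine intervalIntegral.integral_mono_on hc (hcont.intervalIntegrable 0 c)
        (intervalIntegrable_betaProfile_integrand c 0 c) fun u hu => ?_
      have hS := one_pos.trans_le (one_le_dslope_sinh_zero (c - u))
      rw [div_le_div_iff₀ hcosh hS, mul_assoc]
      exact mul_le_mul_of_nonneg_left
        ((mul_comm _ _).trans_le (dslope_sinh_zero_sub_mul_cosh_le hu.1 hu.2))
        (sinh_nonneg_iff.2 hu.1)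

lemma sqrt_sub_sqrt_sq_le {a b : ℝ} (ha : 0 ≤ a) (hb : 0 ≤ b) :
    (√a - √b) ^ 2 ≤ (a - b) ^ 2 / (a + b) := by
  obtain ⟨x, hx, rfl⟩ : ∃ x, 0 ≤ x ∧ x ^ 2 = a := ⟨√a, sqrt_nonneg a, sq_sqrt ha⟩
  obtain ⟨y, hy, rfl⟩ : ∃ y, 0 ≤ y ∧ y ^ 2 = b := ⟨√b, sqrt_nonneg b, sq_sqrt hb⟩
  rw [sqrt_sq hx, sqrt_sq hy]
  rcases (add_nonneg (sq_nonneg x) (sq_nonneg y)).eq_or_lt with h | h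
  · have hx0 : x = 0 := by nlinarith [sq_nonneg x, sq_nonneg y]
    have hy0 : y = 0 := by nlinarith [sq_nonneg x, sq_nonneg y]
    simp [hx0, hy0]
  · rw [le_div_iff₀ h]
    nlinarith [mul_nonneg (sq_nonneg (x - y)) (mul_nonneg hx hy)]

lemma exists_mul_exp_eq {a b : ℝ} (ha : 0 < a) (hb : 0 < b) :
    ∃ m > 0, ∃ c, m * exp c = a ∧ m * exp (-c) = b := by
  refine ⟨exp ((log a + log b) / 2), exp_pos _, (log a - log b) / 2, ?_, ?_⟩
  · rw [← exp_add, show (log a + log b) / 2 + (log a - log b) / 2 = log a by ring, exp_log ha]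
  · rw [← exp_add, show (log a + log b) / 2 + -((log a - log b) / 2) = log b by ring,
      exp_log hb]

theorem betaEps_bounds_general (ε a b : ℝ) (ha : 0 < a) (hb : 0 < b) :
    ε ^ 2 / 4 * (Real.sqrt a - Real.sqrt b) ^ 2 ≤ ε ^ 2 / 4 * (a - b) ^ 2 / (a + b) ∧
    ε ^ 2 / 4 * (a - b) ^ 2 / (a + b) ≤ betaEps ε a b ∧
    betaEps ε a b ≤ ε ^ 2 / 2 * (Real.sqrt a - Real.sqrt b) ^ 2 := by
  refine ⟨by rw [mul_div_assoc]; gcongr; exact sqrt_sub_sqrt_sq_le ha.le hb.le, ?_⟩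
  obtain ⟨m, hm, c, rfl, rfl⟩ := exists_mul_exp_eq ha hb
  have hsum : m * exp c + m * exp (-c) = 2 * m * cosh c := by rw [cosh_eq]; ring
  have hdiff : m * exp c - m * exp (-c) = 2 * m * sinh c := by rw [sinh_eq]; ring
  have hgeom : √(m * exp c) * √(m * exp (-c)) = m := by
    rw [← sqrt_mul ha.le, mul_mul_mul_comm, ← exp_add, add_neg_cancel, exp_zero, mul_one,
      sqrt_mul_self hm.le]
  have hsqrt : (√(m * exp c) - √(m * exp (-c))) ^ 2 = 2 * m * (cosh c - 1) := by
    rw [sub_sq, sq_sqrt ha.le, sq_sqrt hb.le, mul_assoc 2, hgeom]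
    linear_combination hsum
  rw [betaEps_mul_exp ε hm, hsum, hdiff, hsqrt]
  have hcosh := cosh_pos c
  constructor
  · calc ε ^ 2 / 4 * (2 * m * sinh c) ^ 2 / (2 * m * cosh c)
        = ε ^ 2 * m * (sinh c ^ 2 / (2 * cosh c)) := by field_simp; ring
      _ ≤ ε ^ 2 * m * betaProfile c := by gcongr; exact sinh_sq_div_le_betaProfile c
  · calc ε ^ 2 * m * betaProfile c ≤ ε ^ 2 * m * (cosh c - 1) := by
          gcongr; exact betaProfile_le c
      _ = ε ^ 2 / 2 * (2 * m * (cosh c - 1)) := by ring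

/-- Bounds on `β_ε`:
`(ε²/4)(√a - √b)² ≤ (ε²/4)(a-b)²/(a+b) ≤ β_ε(a,b) ≤ (ε²/2)(√a - √b)²`. -/
theorem betaEps_bounds (ε a b : ℝ) (hε : 0 < ε) (ha : 0 < a) (hb : 0 < b) :
    ε ^ 2 / 4 * (Real.sqrt a - Real.sqrt b) ^ 2 ≤ ε ^ 2 / 4 * (a - b) ^ 2 / (a + b) ∧
    ε ^ 2 / 4 * (a - b) ^ 2 / (a + b) ≤ betaEps ε a b ∧
    betaEps ε a b ≤ ε ^ 2 / 2 * (Real.sqrt a - Real.sqrt b) ^ 2 :=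
  betaEps_bounds_general ε a b ha hb
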